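/- Let (W,S) be a Coxeter system and a, b, c ∈ W with a ≤ b in the Bruhat order. Then a * c ≤ b * c, where * denotes the Demazure product (the product in the Coxeter monoid, characterized by s * s = s and the braid relations). -/

import Mathlib

namespace CoxeterPaper

open CoxeterSystem

variable {B : Type*} {W : Type*} [Group W] {M : CoxeterMatrix B}

/-- The Bruhat order on a Coxeter group: the reflexive-transitive closure of the
relation `a < a * t` for `t` a reflection with length increasing. -/
def BruhatLE (cs : CoxeterSystem M W) (x y : W) : Prop :=
  Relation.ReflTransGen
    (fun a b => (∃ t, cs.IsReflection t ∧ b = a * t) ∧ cs.length a < cs.length b) x y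

/-- One step of the Demazure product with a simple reflection. -/
noncomputable def demStep (cs : CoxeterSystem M W) (x : W) (i : B) : W :=
  if cs.length x < cs.length (x * cs.simple i) then x * cs.simple i else x

/-- The Demazure product of `x` with the word `l`. -/
noncomputable def demWord (cs : CoxeterSystem M W) (x : W) (l : List B) : W :=
  l.foldl (demStep cs) x

/-- The Demazure product (Coxeter monoid product) of two elements: fold the
Demazure action of a reduced word of `y` onto `x`. -/
noncomputable def dem (cs : CoxeterSystem M W) (x y : W) : W :=
  demWord cs x (Classical.choose (cs.exists_reduced_word y))

/-- The standard parabolic subgroup attached to a set of simple indices. -/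
def parabolic (cs : CoxeterSystem M W) (I : Set B) : Subgroup W :=
  Subgroup.closure (cs.simple '' I)

/-- `I` is finitary if the parabolic subgroup `W_I` is finite. -/
def Finitary (cs : CoxeterSystem M W) (I : Set B) : Prop :=
  (parabolic cs I : Set W).Finite

/-- The double coset `W_I w W_J` as a subset of `W`. -/
def doset (cs : CoxeterSystem M W) (I J : Set B) (w : W) : Set W :=
  {x | ∃ a ∈ parabolic cs I, ∃ b ∈ parabolic cs J, x = a * w * b}

/-- `p` is an `(I,J)`-double coset. -/
def IsDCoset (cs : CoxeterSystem M W) (I J : Set B) (p : Set W) : Prop :=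
  ∃ w, p = doset cs I J w

/-- `m` is the Bruhat-minimal element of `p`. -/
def IsMinOf (cs : CoxeterSystem M W) (p : Set W) (m : W) : Prop :=
  m ∈ p ∧ ∀ x ∈ p, BruhatLE cs m x

/-- `m` is the Bruhat-maximal element of `p`. -/
def IsMaxOf (cs : CoxeterSystem M W) (p : Set W) (m : W) : Prop :=
  m ∈ p ∧ ∀ x ∈ p, BruhatLE cs x m

/-- `[I 0, …, I d]` is a singlestep expression. -/
def IsSinglestep (I : ℕ → Set B) (d : ℕ) : Prop :=
  ∀ k < d, (∃ s, s ∉ I k ∧ I (k + 1) = insert s (I k)) ∨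
    (∃ s, s ∈ I k ∧ I (k + 1) = I k \ {s})

/-- `p` is a path subordinate to the singlestep expression `[I 0, …, I d]`. -/
def IsSubPath (cs : CoxeterSystem M W) (I : ℕ → Set B) (d : ℕ) (p : ℕ → Set W) : Prop :=
  p 0 = doset cs (I 0) (I 0) 1 ∧
  (∀ i ≤ d, IsDCoset cs (I 0) (I i) (p i)) ∧
  ∀ k < d, (I k ⊆ I (k + 1) → p k ⊆ p (k + 1)) ∧ (I (k + 1) ⊆ I k → p (k + 1) ⊆ p k)

/-- The Demazure product `w_{I_0} * w_{I_1} * ⋯ * w_{I_d}` of the longest elements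
`wI 0, …, wI d`. -/
noncomputable def exprMax (cs : CoxeterSystem M W) (wI : ℕ → W) (d : ℕ) : W :=
  ((List.range d).map fun k => wI (k + 1)).foldl (dem cs) (wI 0)

/-!
Demazure multiplication by `c` folds the steps `x ↦ x * s` (when this is longer) or `x ↦ x` along
a reduced word of `c`, so it suffices that one such step is monotone on a Bruhat cover
`a < a * t`. The only nontrivial case, `a < a * s` but `a * t * s < a * t`, is the lifting property
`a * s ≤ a * t`, which follows from the strong exchange condition applied to a reduced word of
`a * t` ending in `s`.

Strong exchange comes from the reflection-parity representation of `W` on `W × ZMod 2`, in which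
`s` acts by `(t, ε) ↦ (s t s, ε + [t = s])`. It shows that the parity of the number of occurrences
of `t` in the right inversion sequence of a word depends only on the element `w` the word
represents, and this parity is `1` whenever `ℓ (w * t) < ℓ w`.
-/

section ReflectionParity

open scoped Classical

variable (cs : CoxeterSystem M W)

local prefix:100 "s" => cs.simple
local prefix:100 "π" => cs.wordProd
local prefix:100 "ℓ" => cs.length
local prefix:100 "ris" => cs.rightInvSeq

lemma simple_mul_mul_simple_eq_iff (i : B) {x y : W} : s i * x * s i = y ↔ x = s i * y * s i := by
  constructor <;> rintro rfl <;> simp [mul_assoc, cs.simple_mul_simple_cancel_left]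

noncomputable def reflParityStep (i : B) (p : W × ZMod 2) : W × ZMod 2 :=
  (s i * p.1 * s i, p.2 + if p.1 = s i then 1 else 0)

lemma reflParityStep_involutive (i : B) : Function.Involutive (reflParityStep cs i) := by
  rintro ⟨t, ε⟩
  have hconj : s i * t * s i = s i ↔ t = s i := by
    rw [simple_mul_mul_simple_eq_iff, cs.simple_mul_simple_cancel_right]
  ext
  · simp [reflParityStep, mul_assoc, cs.simple_mul_simple_cancel_left]
  · simp only [reflParityStep, hconj, add_assoc]
    split_ifs <;> simp [CharTwo.add_self_eq_zero]

noncomputable def reflParityPerm (i : B) : Equiv.Perm (W × ZMod 2) :=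
  (reflParityStep_involutive cs i).toPerm

lemma reflParityPerm_apply (i : B) (t : W) (ε : ZMod 2) :
    reflParityPerm cs i (t, ε) = (s i * t * s i, ε + if t = s i then 1 else 0) := rfl

lemma reflParityPerm_mul_apply (i i' : B) (t : W) (ε : ZMod 2) :
    (reflParityPerm cs i * reflParityPerm cs i') (t, ε) =
      (s i * s i' * t * (s i * s i')⁻¹,
        ε + (if t = s i' then 1 else 0) + if t = s i' * (s i * s i') then 1 else 0) := by
  have hconj : s i' * t * s i' = s i ↔ t = s i' * (s i * s i') := by
    rw [simple_mul_mul_simple_eq_iff, mul_assoc]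
  rw [Equiv.Perm.mul_apply, reflParityPerm_apply, reflParityPerm_apply, hconj]
  simp only [mul_inv_rev, cs.inv_simple, mul_assoc]

lemma reflParityPerm_mul_pow_apply (i i' : B) (n : ℕ) (t : W) (ε : ZMod 2) :
    ((reflParityPerm cs i * reflParityPerm cs i') ^ n) (t, ε) =
      ((s i * s i') ^ n * t * ((s i * s i') ^ n)⁻¹,
        ε + ∑ j ∈ Finset.range (2 * n), if t = s i' * (s i * s i') ^ j then 1 else 0) := by
  have hshift (t : W) (j : ℕ) :
      s i * s i' * t * (s i * s i')⁻¹ = s i' * (s i * s i') ^ j ↔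
        t = s i' * (s i * s i') ^ (j + 2) := by
    rw [mul_inv_eq_iff_eq_mul, ← eq_inv_mul_iff_mul_eq, mul_assoc (s i'), ← pow_succ,
      pow_succ' _ (j + 1)]
    simp only [mul_inv_rev, cs.inv_simple, mul_assoc]
  induction n generalizing t ε with
  | zero => simp
  | succ n ih =>
    rw [pow_succ, Equiv.Perm.mul_apply, reflParityPerm_mul_apply, ih]
    simp only [hshift, mul_add, mul_one, Finset.sum_range_succ', pow_zero]
    ext
    · simp only [pow_succ, mul_inv_rev, mul_assoc]
    · simp only [zero_add, pow_one, add_assoc, add_comm, add_left_comm]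

lemma reflParityPerm_isLiftable : M.IsLiftable (reflParityPerm cs) := by
  intro i i'
  ext ⟨t, ε⟩ <;> rw [reflParityPerm_mul_pow_apply]
  · simp [cs.simple_mul_simple_pow]
  · have hperiodic (j : ℕ) : s i' * (s i * s i') ^ (M i i' + j) = s i' * (s i * s i') ^ j := by
      rw [pow_add, cs.simple_mul_simple_pow, one_mul]
    rw [two_mul, Finset.sum_range_add]
    simp only [hperiodic, CharTwo.add_self_eq_zero, add_zero]
    rfl

noncomputable def reflParityRep : W →* Equiv.Perm (W × ZMod 2) :=
  cs.lift ⟨reflParityPerm cs, reflParityPerm_isLiftable cs⟩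

lemma reflParityRep_simple (i : B) : reflParityRep cs (s i) = reflParityPerm cs i :=
  cs.lift_apply_simple (reflParityPerm_isLiftable cs) i

lemma reflParityRep_wordProd_apply (ω : List B) (t : W) (ε : ZMod 2) :
    reflParityRep cs (π ω) (t, ε) = (π ω * t * (π ω)⁻¹, ε + (ris ω).count t) := by
  induction ω generalizing ε with
  | nil => simp
  | cons i ω ih =>
    have hris : ris (i :: ω) = (π ω)⁻¹ * s i * π ω :: ris ω := rfl
    have hconj : π ω * t * (π ω)⁻¹ = s i ↔ (π ω)⁻¹ * s i * π ω = t := by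
      constructor <;> intro h <;> rw [← h] <;> group
    rw [wordProd_cons, map_mul, Equiv.Perm.mul_apply, ih, reflParityRep_simple,
      reflParityPerm_apply, hris, List.count_cons, hconj]
    ext
    · simp only [mul_inv_rev, cs.inv_simple, mul_assoc]
    · by_cases h : (π ω)⁻¹ * s i * π ω = t <;> simp [h, add_assoc]

noncomputable def reflParity (w t : W) : ZMod 2 := (reflParityRep cs w (t, 0)).2

lemma reflParity_wordProd (ω : List B) (t : W) : reflParity cs (π ω) t = (ris ω).count t := by
  simp [reflParity, reflParityRep_wordProd_apply]

lemma reflParityRep_apply (w t : W) (ε : ZMod 2) :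
    reflParityRep cs w (t, ε) = (w * t * w⁻¹, ε + reflParity cs w t) := by
  obtain ⟨ω, rfl⟩ := cs.wordProd_surjective w
  rw [reflParityRep_wordProd_apply, reflParity_wordProd]

lemma reflParity_one (t : W) : reflParity cs 1 t = 0 := by
  simp [reflParity]

lemma reflParity_mul (w v t : W) :
    reflParity cs (w * v) t = reflParity cs v t + reflParity cs w (v * t * v⁻¹) := by
  rw [reflParity, map_mul, Equiv.Perm.mul_apply, reflParityRep_apply cs v,
    reflParityRep_apply cs w, zero_add]

lemma reflParity_simple_self (i : B) : reflParity cs (s i) (s i) = 1 := by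
  simp [reflParity, reflParityRep_simple, reflParityPerm_apply]

lemma reflParity_inv (w t : W) : reflParity cs w⁻¹ t = reflParity cs w (w⁻¹ * t * w) := by
  have h := reflParity_mul cs w w⁻¹ t
  rw [mul_inv_cancel, reflParity_one, inv_inv, eq_comm, add_eq_zero_iff_eq_neg,
    ZModModule.neg_eq_self] at h
  exact h

lemma reflParity_self_of_isReflection {t : W} (ht : cs.IsReflection t) :
    reflParity cs t t = 1 := by
  obtain ⟨u, i, rfl⟩ := ht
  have hconj : u⁻¹ * (u * s i * u⁻¹) * u = s i := by group
  calc reflParity cs (u * s i * u⁻¹) (u * s i * u⁻¹)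
      = reflParity cs u⁻¹ (u * s i * u⁻¹) + reflParity cs (u * s i) (s i) := by
        rw [reflParity_mul, inv_inv, hconj]
    _ = reflParity cs u (s i) + (1 + reflParity cs u (s i)) := by
        rw [reflParity_inv, hconj, reflParity_mul, reflParity_simple_self, mul_inv_cancel_right]
    _ = 1 := by rw [add_left_comm, CharTwo.add_self_eq_zero, add_zero]

lemma mem_rightInvSeq_of_reflParity_eq_one {ω : List B} {t : W}
    (h : reflParity cs (π ω) t = 1) : t ∈ ris ω := by
  by_contra hnot
  rw [reflParity_wordProd, List.count_eq_zero_of_not_mem hnot, Nat.cast_zero] at h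
  exact zero_ne_one h

lemma reflParity_eq_one_of_isRightInversion {w t : W} (h : cs.IsRightInversion w t) :
    reflParity cs w t = 1 := by
  obtain ⟨ht, hlt⟩ := h
  have hdescent (v : W) (hv : reflParity cs v t = 1) : ℓ (v * t) < ℓ v := by
    obtain ⟨ω, hω, rfl⟩ := cs.exists_isReduced v
    exact (cs.isRightInversion_of_mem_rightInvSeq hω (mem_rightInvSeq_of_reflParity_eq_one cs hv)).2
  rcases (by decide : ∀ x : ZMod 2, x = 0 ∨ x = 1) (reflParity cs w t) with h0 | h1
  · -- by the cocycle rule `t` would then also be a descent of `w * t`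
    have hwt : reflParity cs (w * t) t = 1 := by
      rw [reflParity_mul, mul_inv_cancel_right, reflParity_self_of_isReflection cs ht, h0,
        add_zero]
    have := hdescent _ hwt
    rw [mul_assoc, ht.mul_self, mul_one] at this
    omega
  · exact h1

theorem mem_rightInvSeq_of_isRightInversion {ω : List B} {t : W}
    (h : cs.IsRightInversion (π ω) t) : t ∈ ris ω :=
  mem_rightInvSeq_of_reflParity_eq_one cs (reflParity_eq_one_of_isRightInversion cs h)

lemma exists_eraseIdx_of_mem_rightInvSeq {ω : List B} {t : W} (ht : t ∈ ris ω) :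
    ∃ j < ω.length, π (ω.eraseIdx j) = π ω * t := by
  obtain ⟨j, hj, rfl⟩ := List.getElem_of_mem ht
  refine ⟨j, by simpa using hj, ?_⟩
  rw [← cs.wordProd_mul_getD_rightInvSeq, List.getD_eq_getElem]

end ReflectionParity

section Bruhat

variable (cs : CoxeterSystem M W)

local prefix:100 "s" => cs.simple
local prefix:100 "π" => cs.wordProd
local prefix:100 "ℓ" => cs.length
local prefix:100 "ris" => cs.rightInvSeq

lemma bruhatLE_mul_reflection {a t : W} (ht : cs.IsReflection t) (hlt : ℓ a < ℓ (a * t)) :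
    BruhatLE cs a (a * t) :=
  Relation.ReflTransGen.single ⟨⟨t, ht, rfl⟩, hlt⟩

lemma bruhatLE_mul_simple {a : W} {i : B} (hlt : ℓ a < ℓ (a * s i)) : BruhatLE cs a (a * s i) :=
  bruhatLE_mul_reflection cs (cs.isReflection_simple i) hlt

lemma bruhatLE_wordProd_eraseIdx {ω : List B} (hω : cs.IsReduced ω) {j : ℕ} (hj : j < ω.length) :
    BruhatLE cs (π (ω.eraseIdx j)) (π ω) := by
  have hj' : j < (ris ω).length := by rwa [cs.length_rightInvSeq]
  have hmul : π ω * (ris ω)[j] = π (ω.eraseIdx j) := by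
    rw [← List.getD_eq_getElem _ 1 hj', cs.wordProd_mul_getD_rightInvSeq]
  obtain ⟨ht, hlt⟩ := cs.isRightInversion_of_mem_rightInvSeq hω (List.getElem_mem hj')
  have hω' : π ω = π (ω.eraseIdx j) * (ris ω)[j] := by
    rw [← hmul, mul_assoc, ht.mul_self, mul_one]
  rw [hmul] at hlt
  rw [hω'] at hlt ⊢
  exact bruhatLE_mul_reflection cs ht hlt

lemma bruhatLE_mul_simple_of_mul_simple_lt {a t : W} (i : B) (ht : cs.IsReflection t)
    (hlt : ℓ a < ℓ (a * t)) (hat : ℓ (a * t * s i) < ℓ (a * t)) :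
    BruhatLE cs (a * s i) (a * t) := by
  obtain ⟨ρ, hρ, hρat⟩ := cs.exists_isReduced (a * t * s i)
  have hat' : a * t = π (ρ ++ [i]) := by
    rw [wordProd_append, wordProd_singleton, ← hρat, cs.simple_mul_simple_cancel_right]
  have hred : cs.IsReduced (ρ ++ [i]) := by
    rcases cs.length_mul_simple (a * t) i with h | h
    · omega
    · rw [CoxeterSystem.IsReduced, ← hat', List.length_append, List.length_singleton, ← hρ.eq,
        ← hρat, ← h]
  have hinv : cs.IsRightInversion (π (ρ ++ [i])) t := by
    rw [← hat']
    refine ⟨ht, ?_⟩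
    rwa [mul_assoc, ht.mul_self, mul_one]
  obtain ⟨j, hj, hja⟩ :=
    exists_eraseIdx_of_mem_rightInvSeq cs (mem_rightInvSeq_of_isRightInversion cs hinv)
  rw [← hat', mul_assoc, ht.mul_self, mul_one] at hja
  rw [List.length_append, List.length_singleton] at hj
  rcases Nat.lt_succ_iff_lt_or_eq.mp hj with hjρ | rfl
  · -- `a * s i = π (ρ.eraseIdx j) ≤ π ρ < π ρ * s i = a * t`
    rw [List.eraseIdx_append_of_lt_length hjρ, wordProd_append, wordProd_singleton] at hja
    have has : a * s i = π (ρ.eraseIdx j) := by rw [← hja, cs.simple_mul_simple_cancel_right]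
    have hρs : π ρ * s i = a * t := by rw [← hρat, cs.simple_mul_simple_cancel_right]
    rw [has, ← hρs]
    refine (bruhatLE_wordProd_eraseIdx cs hρ hjρ).trans (bruhatLE_mul_simple cs ?_)
    rwa [hρs, ← hρat]
  · rw [List.eraseIdx_append_of_length_le le_rfl, Nat.sub_self, List.eraseIdx_cons_zero,
      List.append_nil] at hja
    have has : a * t = a * s i := by
      rw [← cs.simple_mul_simple_cancel_right (w := a * t) i, hρat, hja]
    rw [has]
    exact Relation.ReflTransGen.refl

lemma bruhatLE_demStep_mul_reflection (i : B) {a t : W} (ht : cs.IsReflection t)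
    (hlt : ℓ a < ℓ (a * t)) : BruhatLE cs (demStep cs a i) (demStep cs (a * t) i) := by
  have hle := bruhatLE_mul_reflection cs ht hlt
  unfold demStep
  split_ifs with ha hat hat
  · have hconj : a * t * s i = a * s i * (s i * t * s i) := by
      simp only [mul_assoc, cs.simple_mul_simple_cancel_left]
    have hlen : ℓ (a * s i) < ℓ (a * t * s i) := by
      rcases cs.length_mul_simple a i with _ | _ <;>
        rcases cs.length_mul_simple (a * t) i with _ | _ <;> omega
    rw [hconj] at hlen ⊢
    refine bruhatLE_mul_reflection cs ?_ hlen
    simpa only [cs.inv_simple] using ht.conj (s i)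
  · exact bruhatLE_mul_simple_of_mul_simple_lt cs i ht hlt
      (lt_of_le_of_ne (not_lt.mp hat) (cs.length_mul_simple_ne _ i))
  · exact hle.trans (bruhatLE_mul_simple cs hat)
  · exact hle

lemma demStep_mono (i : B) {a b : W} (h : BruhatLE cs a b) :
    BruhatLE cs (demStep cs a i) (demStep cs b i) := by
  induction h with
  | refl => exact Relation.ReflTransGen.refl
  | tail _ hstep ih =>
    obtain ⟨⟨t, ht, rfl⟩, hlt⟩ := hstep
    exact ih.trans (bruhatLE_demStep_mul_reflection cs i ht hlt)

lemma demWord_mono (l : List B) {a b : W} (h : BruhatLE cs a b) :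
    BruhatLE cs (demWord cs a l) (demWord cs b l) := by
  induction l generalizing a b with
  | nil => exact h
  | cons i l ih => exact ih (demStep_mono cs i h)

end Bruhat

/-- If `a ≤ b` in Bruhat order then `a * c ≤ b * c` for the Demazure product. -/
theorem dem_mono_left (cs : CoxeterSystem M W) (a b c : W) (h : BruhatLE cs a b) :
    BruhatLE cs (dem cs a c) (dem cs b c) :=
  demWord_mono cs _ h

end CoxeterPaper
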